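/- arXiv:0910.0218 — 4 statements merged into one kernel-verified Lean document; each statement's English description precedes it below -/
import Mathlib

section
/- If f and g are orientation-preserving homeomorphisms of the circle S^1, each having at least one fixed point, and Fix(f) ∩ Fix(g) = ∅, then the group generated by f and g contains a non-abelian free subgroup. -/
open Function Set

notation "S¹" => AddCircle (1:ℝ)

/-- The group structure on self-homeomorphisms, with `(f * g) x = f (g x)`. -/
instance homeoGroup (X : Type*) [TopologicalSpace X] : Group (X ≃ₜ X) where
  mul f g := g.trans f
  one := Homeomorph.refl X
  inv := Homeomorph.symm
  mul_assoc a b c := Homeomorph.ext fun _ => rfl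
  one_mul a := Homeomorph.ext fun _ => rfl
  mul_one a := Homeomorph.ext fun _ => rfl
  inv_mul_cancel a := Homeomorph.ext fun x => a.symm_apply_apply x

/-- `F` is a lift of the circle homeomorphism `f` through the projection `ℝ → ℝ/ℤ`. -/
def IsLift (f : S¹ ≃ₜ S¹) (F : CircleDeg1Lift) : Prop :=
  ∀ x : ℝ, f (x : S¹) = ((F x : ℝ) : S¹)

/-- A circle homeomorphism is orientation-preserving iff it admits a monotone degree-one
lift to the real line. -/
def OrientationPreserving (f : S¹ ≃ₜ S¹) : Prop := ∃ F : CircleDeg1Lift, IsLift f F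

open Classical in
/-- Poincaré's rotation number of a circle homeomorphism, as an element of `ℝ/ℤ`;
the translation number of any lift, reduced mod 1. -/
noncomputable def rot (f : S¹ ≃ₜ S¹) : S¹ :=
  if h : OrientationPreserving f then ((h.choose.translationNumber : ℝ) : S¹) else 0

/-- The fixed-point set of a circle homeomorphism. -/
def FixSet (f : S¹ ≃ₜ S¹) : Set S¹ := {s | f s = s}

/-- A subgroup has a non-abelian free subgroup iff the free group of rank 2 embeds into it. -/
def HasFreeSubgroup {Γ : Type*} [Group Γ] (G : Subgroup Γ) : Prop :=
  ∃ φ : FreeGroup (Fin 2) →* Γ, Function.Injective φ ∧ ∀ w, φ w ∈ G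

/-!
Separate `Fix f` and `Fix g` by disjoint open sets `U` and `V`. A lift of `f` to `ℝ` fixing a
point is an increasing homeomorphism `Φ` commuting with integer translations, so it has fixed
points in both directions; between two consecutive ones, `Φ` moves every point monotonically
towards one of them. Hence the orbits of `Φ` and `Φ⁻¹` converge to fixed points, locally uniformly,
and compactness of `Uᶜ` gives an `N` such that every nonzero power of `f ^ N` maps `Uᶜ` into `U`.
The same holds for `g` and `V` with some `M`, and the ping-pong lemma shows that `f ^ N` and
`g ^ M` generate a free group of rank two.
-/

open Filter Topology Pointwise

section Attraction

variable {α : Type*} [ConditionallyCompleteLinearOrder α] [TopologicalSpace α] [OrderTopology α]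
  {Φ : α → α}

theorem tendsto_iterate_of_forall_map_lt (hmono : Monotone Φ) (hcont : Continuous Φ) {u x : α}
    (hux : u ≤ x) (hu : Φ u = u) (hlt : ∀ y ∈ Ioc u x, Φ y < y) :
    Tendsto (fun n => Φ^[n] x) atTop (𝓝 u) := by
  have hmaps : MapsTo Φ (Icc u x) (Icc u x) := fun y hy =>
    ⟨hu ▸ hmono hy.1,
      (hy.1.eq_or_lt.elim (fun h => h ▸ hu.le) fun h => (hlt y ⟨h, hy.2⟩).le).trans hy.2⟩
  have hmem n : Φ^[n] x ∈ Icc u x := hmaps.iterate n ⟨hux, le_rfl⟩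
  have hanti := hmono.antitone_iterate_of_map_le (hmaps ⟨hux, le_rfl⟩).2
  have hbdd : BddBelow (range fun n => Φ^[n] x) := ⟨u, forall_mem_range.2 fun n => (hmem n).1⟩
  have hL := tendsto_atTop_ciInf hanti hbdd
  have hLmem : (⨅ n, Φ^[n] x) ∈ Icc u x :=
    isClosed_Icc.mem_of_tendsto hL (.of_forall hmem)
  have hLfix : Φ (⨅ n, Φ^[n] x) = ⨅ n, Φ^[n] x :=
    isFixedPt_of_tendsto_iterate hL hcont.continuousAt
  obtain hLu | hLu := hLmem.1.eq_or_lt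
  · rwa [← hLu] at hL
  · exact absurd hLfix (hlt _ ⟨hLu, hLmem.2⟩).ne

theorem eventually_mapsTo_iterate_of_forall_map_lt (hmono : Monotone Φ) (hcont : Continuous Φ)
    {u x : α} (hux : u ≤ x) (hu : Φ u = u) (hlt : ∀ y ∈ Ioc u x, Φ y < y) {W : Set α}
    (hW : W ∈ 𝓝 u) : ∀ᶠ n in atTop, MapsTo Φ^[n] (Icc u x) W := by
  have hIcc := (tendsto_const_nhds (x := u)).Icc
    (tendsto_iterate_of_forall_map_lt hmono hcont hux hu hlt)
  filter_upwards [hIcc.eventually (eventually_smallSets_subset.2 hW)] with n hn y hy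
  refine hn ⟨?_, (hmono.iterate n) hy.2⟩
  simpa only [iterate_fixed hu] using (hmono.iterate n) hy.1

theorem exists_mem_nhds_eventually_mapsTo_iterate_of_map_lt [DenselyOrdered α] [NoMaxOrder α]
    (hmono : Monotone Φ) (hcont : Continuous Φ) {x : α} (hx : Φ x < x)
    (hbelow : ∃ z ≤ x, Φ z = z) {U : Set α} (hU : ∀ z, Φ z = z → U ∈ 𝓝 z) :
    ∃ O ∈ 𝓝 x, ∀ᶠ n in atTop, MapsTo Φ^[n] O U := by
  set u := sSup {z | Φ z = z ∧ z ≤ x}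
  have hu : Φ u = u ∧ u ≤ x :=
    ((isClosed_eq hcont continuous_id).inter isClosed_Iic).csSup_mem
      (let ⟨z, hzx, hz⟩ := hbelow; ⟨z, hz, hzx⟩) ⟨x, fun _ h => h.2⟩
  have hux : u < x := hu.2.lt_of_ne fun h => hx.ne (h ▸ hu.1)
  have hnofix : ∀ y ∈ Ioc u x, Φ y ≠ y := fun y hy hfix =>
    hy.1.not_ge (le_csSup ⟨x, fun _ h => h.2⟩ ⟨hfix, hy.2⟩)
  obtain ⟨b, hxb, hb⟩ := exists_Ico_subset_of_mem_nhds
    ((isOpen_lt hcont continuous_id).mem_nhds hx) (exists_gt x)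
  obtain ⟨x₁, hxx₁, hx₁b⟩ := exists_between hxb
  have hlt : ∀ y ∈ Ioc u x₁, Φ y < y := by
    intro y hy
    rcases le_or_gt x y with hxy | hyx
    · exact hb ⟨hxy, hy.2.trans_lt hx₁b⟩
    · by_contra! hy'
      -- a sign change of `Φ - id` on `[y, x]` produces a fixed point there
      obtain ⟨z, hz, hfix⟩ := isPreconnected_Icc.intermediate_value₂ (left_mem_Icc.2 hyx.le)
        (right_mem_Icc.2 hyx.le) continuousOn_id hcont.continuousOn hy' hx.le
      exact hnofix z ⟨hy.1.trans_le hz.1, hz.2⟩ hfix.symm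
  refine ⟨Ioo u x₁, Ioo_mem_nhds hux hxx₁, ?_⟩
  filter_upwards [eventually_mapsTo_iterate_of_forall_map_lt hmono hcont (hux.trans hxx₁).le hu.1
    hlt (hU u hu.1)] with n hn using hn.mono_left Ioo_subset_Icc_self

theorem exists_mem_nhds_eventually_mapsTo_iterate [DenselyOrdered α] [NoMaxOrder α]
    [NoMinOrder α] (hmono : Monotone Φ) (hcont : Continuous Φ)
    (hbelow : ∀ x, ∃ z ≤ x, Φ z = z) (habove : ∀ x, ∃ z ≥ x, Φ z = z) {U : Set α}
    (hU : ∀ z, Φ z = z → U ∈ 𝓝 z) {x : α} (hx : Φ x ≠ x) :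
    ∃ O ∈ 𝓝 x, ∀ᶠ n in atTop, MapsTo Φ^[n] O U := by
  rcases hx.lt_or_gt with hlt | hgt
  · exact exists_mem_nhds_eventually_mapsTo_iterate_of_map_lt hmono hcont hlt (hbelow x) hU
  -- the case `x < Φ x` is the case `Φ x < x` for the reversed order
  · exact exists_mem_nhds_eventually_mapsTo_iterate_of_map_lt (α := αᵒᵈ) hmono.dual hcont hgt
      (habove x) hU

end Attraction

theorem exists_forall_zpow_of_eventually_pow {G : Type*} [Group G] {P : G → Prop} {g : G}
    (h₁ : ∀ᶠ n in atTop, P (g ^ n)) (h₂ : ∀ᶠ n in atTop, P (g⁻¹ ^ n)) :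
    ∃ N : ℕ, ∀ m : ℤ, m ≠ 0 → P ((g ^ N) ^ m) := by
  obtain ⟨N, hN⟩ := (h₁.and (h₂.and (eventually_ge_atTop 1))).exists_forall_of_atTop
  refine ⟨N, fun m hm => ?_⟩
  obtain ⟨k, rfl | rfl⟩ := m.eq_nat_or_neg
  · rw [zpow_natCast, ← pow_mul]
    exact (hN _ (Nat.le_mul_of_pos_right N (by omega))).1
  · rw [zpow_neg, zpow_natCast, ← pow_mul, ← inv_pow]
    exact (hN _ (Nat.le_mul_of_pos_right N (by omega))).2.1

theorem FreeGroup.injective_lift_of_ping_pong_zpow {ι : Type*} [Nontrivial ι] {G : Type*}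
    [Group G] (a : ι → G) {α : Type*} [MulAction G α] (X : ι → Set α) (hXne : ∀ i, (X i).Nonempty)
    (hXdisj : Pairwise (Disjoint on X)) (hX : ∀ i, ∀ n : ℤ, n ≠ 0 → a i ^ n • (X i)ᶜ ⊆ X i) :
    Injective (FreeGroup.lift a) := by
  have hlift : FreeGroup.lift a = (Monoid.CoprodI.lift fun i => FreeGroup.lift fun _ => a i).comp
      (freeGroupEquivCoprodI (ι := ι)).toMonoidHom := by
    ext i
    simp
  rw [hlift, MonoidHom.coe_comp]
  refine Injective.comp ?_ freeGroupEquivCoprodI.injective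
  refine Monoid.CoprodI.lift_injective_of_ping_pong _ (Or.inr ⟨Classical.arbitrary ι, ?_⟩) X hXne
    hXdisj fun i j hij => FreeGroup.freeGroupUnitEquivInt.forall_congr_left.mpr fun n hn => ?_
  · rw [FreeGroup.freeGroupUnitEquivInt.cardinal_eq, Cardinal.mk_denumerable]
    exact Cardinal.natCast_le_aleph0
  · change FreeGroup.lift (fun _ => a i) (FreeGroup.of () ^ n) • X j ⊆ X i
    rw [map_zpow, FreeGroup.lift_apply_of]
    refine (smul_set_mono (hXdisj hij.symm).subset_compl_right).trans (hX i n ?_)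
    rintro rfl
    exact hn rfl

theorem Homeomorph.coe_pow {X : Type*} [TopologicalSpace X] (h : X ≃ₜ X) (n : ℕ) :
    ⇑(h ^ n) = h^[n] := by
  induction n with
  | zero => rfl
  | succ n ih => rw [pow_succ, iterate_succ, ← ih]; rfl

instance Homeomorph.applyMulAction (X : Type*) [TopologicalSpace X] : MulAction (X ≃ₜ X) X where
  smul h x := h x
  one_smul _ := rfl
  mul_smul _ _ _ := rfl

theorem AddCircle.coe_eq_coe_iff_exists_int {x y : ℝ} : (x : S¹) = y ↔ ∃ k : ℤ, y = x + k := by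
  rw [eq_comm, ← sub_eq_zero, ← AddCircle.coe_sub, AddCircle.coe_eq_zero_iff]
  simp only [sub_eq_iff_eq_add', zsmul_eq_mul, mul_one, eq_comm]

section CircleHomeomorph

variable {f : S¹ ≃ₜ S¹} {F : CircleDeg1Lift}

theorem IsLift.injective (hF : IsLift f F) : Injective F := by
  intro a b hab
  obtain ⟨k, rfl⟩ := AddCircle.coe_eq_coe_iff_exists_int.1
    (f.injective (by rw [hF, hF, hab]) : (a : S¹) = b)
  rw [F.map_add_int, left_eq_add, Int.cast_eq_zero] at hab
  simp [hab]

theorem IsLift.surjective (hF : IsLift f F) : Surjective F := by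
  intro y
  obtain ⟨b, hb⟩ := QuotientAddGroup.mk_surjective (f.symm y)
  obtain ⟨k, hk⟩ := AddCircle.coe_eq_coe_iff_exists_int.1
    (show ((F b : ℝ) : S¹) = y by rw [← hF]; exact hb ▸ f.apply_symm_apply y)
  exact ⟨b + k, by rw [F.map_add_int, hk]⟩

theorem IsLift.exists_isLift_apply_eq_self (hF : IsLift f F) {x : ℝ} (hx : f x = x) :
    ∃ G : CircleDeg1Lift, IsLift f G ∧ G x = x := by
  obtain ⟨k, hk⟩ := AddCircle.coe_eq_coe_iff_exists_int.1 ((hF x).symm.trans hx)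
  refine ⟨CircleDeg1Lift.translate (Multiplicative.ofAdd (k : ℝ)) * F, fun y => ?_, ?_⟩
  · rw [hF, CircleDeg1Lift.mul_apply, CircleDeg1Lift.translate_apply]
    exact AddCircle.coe_eq_coe_iff_exists_int.2 ⟨k, add_comm _ _⟩
  · rw [CircleDeg1Lift.mul_apply, CircleDeg1Lift.translate_apply]
    linarith

theorem pow_apply_coe_of_semiconj {Φ : ℝ → ℝ} (h : Semiconj ((↑) : ℝ → S¹) Φ f) (n : ℕ)
    (x : ℝ) : (f ^ n) (x : S¹) = (Φ^[n] x : ℝ) := by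
  rw [Homeomorph.coe_pow, (h.iterate_right n).eq]

theorem eventually_mapsTo_pow_compl {Φ : ℝ → ℝ} (hlift : Semiconj ((↑) : ℝ → S¹) Φ f)
    (hmono : Monotone Φ) (hcont : Continuous Φ) (hbelow : ∀ x, ∃ z ≤ x, Φ z = z)
    (habove : ∀ x, ∃ z ≥ x, Φ z = z) {U : Set S¹} (hU : IsOpen U) (hfix : FixSet f ⊆ U) :
    ∀ᶠ n in atTop, MapsTo ⇑(f ^ n) Uᶜ U := by
  refine hU.isClosed_compl.isCompact.induction_on
    (p := fun K => ∀ᶠ n in atTop, MapsTo ⇑(f ^ n) K U) (.of_forall fun _ => mapsTo_empty _ _)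
    (fun K L hKL hL => hL.mono fun n hn => hn.mono_left hKL)
    (fun K L hK hL => (hK.and hL).mono fun n hn => hn.1.union hn.2) ?_
  rintro s hs
  obtain ⟨x, rfl⟩ := QuotientAddGroup.mk_surjective s
  have hmemU : ∀ z, Φ z = z → (z : S¹) ∈ U := fun z hz =>
    hfix (show f z = z by rw [← hlift.eq, hz])
  obtain ⟨O, hO, hOU⟩ := exists_mem_nhds_eventually_mapsTo_iterate hmono hcont hbelow habove
    (fun z hz => (hU.preimage continuous_quotient_mk').mem_nhds (hmemU z hz))
    fun h => hs (hmemU x h)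
  refine ⟨(↑) '' O,
    mem_nhdsWithin_of_mem_nhds (QuotientAddGroup.isOpenMap_coe.image_mem_nhds hO), ?_⟩
  filter_upwards [hOU] with n hn
  rintro _ ⟨y, hy, rfl⟩
  show (f ^ n) (y : S¹) ∈ U
  rw [pow_apply_coe_of_semiconj hlift]
  exact hn hy

theorem OrientationPreserving.exists_forall_zpow_mapsTo_compl (hf : OrientationPreserving f)
    (hf0 : (FixSet f).Nonempty) {U : Set S¹} (hU : IsOpen U) (hfix : FixSet f ⊆ U) :
    ∃ N : ℕ, ∀ m : ℤ, m ≠ 0 → MapsTo ⇑((f ^ N) ^ m) Uᶜ U := by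
  obtain ⟨F, hF⟩ := hf
  obtain ⟨s, hs⟩ := hf0
  obtain ⟨x, rfl⟩ := QuotientAddGroup.mk_surjective s
  obtain ⟨G, hG, hGx⟩ := hF.exists_isLift_apply_eq_self hs
  set Φ : ℝ ≃o ℝ := StrictMono.orderIsoOfSurjective G
    (G.monotone.strictMono_of_injective hG.injective) hG.surjective
  have hΦ : ∀ k : ℤ, Φ (x + k) = x + k := fun k => by
    simp [Φ, G.map_add_int, hGx]
  have hbelow : ∀ y, ∃ z ≤ y, Φ z = z := fun y =>
    ⟨x + ⌊y - x⌋, by linarith [Int.floor_le (y - x)], hΦ _⟩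
  have habove : ∀ y, ∃ z ≥ y, Φ z = z := fun y =>
    ⟨x + ⌈y - x⌉, by linarith [Int.le_ceil (y - x)], hΦ _⟩
  have hsymm : ∀ z, Φ z = z → Φ.symm z = z := fun z hz => Φ.symm_apply_eq.2 hz.symm
  have hlift : Semiconj ((↑) : ℝ → S¹) Φ f := fun y => (hG y).symm
  exact exists_forall_zpow_of_eventually_pow (P := fun h : S¹ ≃ₜ S¹ => MapsTo ⇑h Uᶜ U)
    (eventually_mapsTo_pow_compl hlift Φ.monotone Φ.continuous hbelow habove hU hfix)
    (eventually_mapsTo_pow_compl (f := f⁻¹)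
      (hlift.inverses_right Φ.apply_symm_apply f.symm_apply_apply) Φ.symm.monotone Φ.symm.continuous
      (fun y => (hbelow y).imp fun z hz => ⟨hz.1, hsymm z hz.2⟩)
      (fun y => (habove y).imp fun z hz => ⟨hz.1, hsymm z hz.2⟩) hU
      fun t ht => hfix (f.symm_apply_eq.1 ht).symm)

end CircleHomeomorph

/-- If two orientation-preserving circle homeomorphisms both have fixed points but share no
common fixed point, then the group they generate contains a non-abelian free subgroup. -/
theorem stmt0 (f g : S¹ ≃ₜ S¹) (hf : OrientationPreserving f) (hg : OrientationPreserving g)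
    (hf0 : (FixSet f).Nonempty) (hg0 : (FixSet g).Nonempty)
    (hdisj : FixSet f ∩ FixSet g = ∅) :
    HasFreeSubgroup (Subgroup.closure {f, g}) := by
  obtain ⟨U, V, hU, hV, hfU, hgV, hUV⟩ := SeparatedNhds.of_isCompact_isCompact
    (isClosed_eq f.continuous continuous_id).isCompact
    (isClosed_eq g.continuous continuous_id).isCompact (disjoint_iff_inter_eq_empty.2 hdisj)
  obtain ⟨M, hM⟩ := hf.exists_forall_zpow_mapsTo_compl hf0 hU hfU
  obtain ⟨N, hN⟩ := hg.exists_forall_zpow_mapsTo_compl hg0 hV hgV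
  have hrange : (FreeGroup.lift ![f ^ M, g ^ N]).range ≤ Subgroup.closure {f, g} := by
    rw [FreeGroup.range_lift_eq_closure, Subgroup.closure_le, range_subset_iff, Fin.forall_fin_two]
    exact ⟨pow_mem (Subgroup.subset_closure (by simp)) M,
      pow_mem (Subgroup.subset_closure (by simp)) N⟩
  refine ⟨FreeGroup.lift ![f ^ M, g ^ N], FreeGroup.injective_lift_of_ping_pong_zpow _ ![U, V]
    (Fin.forall_fin_two.2 ⟨hf0.mono hfU, hg0.mono hgV⟩) ?_
    (Fin.forall_fin_two.2 ⟨fun m hm => (hM m hm).image_subset,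
      fun n hn => (hN n hn).image_subset⟩),
    fun w => hrange ⟨w, rfl⟩⟩
  intro i j hij
  fin_cases i <;> fin_cases j
  exacts [absurd rfl hij, hUV, hUV.symm, absurd rfl hij]
end

section
/- Let G be a group of permutations of a set X, and g₁, g₂ ∈ G. If X₁ and X₂ are disjoint nonempty subsets of X such that for all nonzero integers n and all i ≠ j, g_i^n(X_j) ⊆ X_i, then g₁ and g₂ freely generate a free subgroup of rank 2. -/
/-!
`FreeGroup ι` is the free product of the infinite cyclic groups `FreeGroup Unit ≅ ℤ`, one for
each generator, so this is Mathlib's ping-pong lemma for free products: a nonzero power of the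
`i`-th generator is a nontrivial element of the `i`-th factor. That lemma also needs some factor
with at least three elements, which holds as the factors are infinite.
-/

open Cardinal Function Pointwise

namespace FreeGroup

theorem three_le_mk_freeGroupUnit : 3 ≤ #(FreeGroup Unit) := by
  rw [freeGroupUnitEquivInt.cardinal_eq, mk_int]
  exact_mod_cast (natCast_lt_aleph0 (n := 3)).le

theorem injective_lift_of_zpow_ping_pong {ι G α : Type*} [Nontrivial ι] [Group G]
    [MulAction G α] (a : ι → G) (X : ι → Set α) (hXnonempty : ∀ i, (X i).Nonempty)
    (hXdisj : Pairwise (Disjoint on X))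
    (hpp : Pairwise fun i j => ∀ n : ℤ, n ≠ 0 → a i ^ n • X j ⊆ X i) :
    Injective (lift a) := by
  obtain ⟨i₀⟩ := ‹Nontrivial ι›.to_nonempty
  have hlift : lift a = (Monoid.CoprodI.lift fun i => lift fun _ : Unit => a i).comp
      freeGroupEquivCoprodI.toMonoidHom := by
    ext; simp
  rw [hlift, MonoidHom.coe_comp]
  refine (Monoid.CoprodI.lift_injective_of_ping_pong (H := fun _ => FreeGroup Unit) _
    (Or.inr ⟨i₀, three_le_mk_freeGroupUnit⟩) X hXnonempty hXdisj ?_).comp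
    freeGroupEquivCoprodI.injective
  intro i j hij w hw
  obtain ⟨n, rfl⟩ : ∃ n : ℤ, of () ^ n = w := freeGroupUnitEquivInt.symm.surjective w
  have hn : n ≠ 0 := by rintro rfl; exact hw (zpow_zero _)
  simpa using hpp hij n hn

end FreeGroup

theorem stmt1_general {X : Type*} (g₁ g₂ : Equiv.Perm X)
    (X₁ X₂ : Set X) (h₁ : X₁.Nonempty) (h₂ : X₂.Nonempty) (hdisj : Disjoint X₁ X₂)
    (hp₁ : ∀ n : ℤ, n ≠ 0 → ⇑(g₁ ^ n) '' X₂ ⊆ X₁)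
    (hp₂ : ∀ n : ℤ, n ≠ 0 → ⇑(g₂ ^ n) '' X₁ ⊆ X₂) :
    Function.Injective
      ⇑(FreeGroup.lift (fun i : Fin 2 => if i = 0 then g₁ else g₂) :
        FreeGroup (Fin 2) →* Equiv.Perm X) := by
  refine FreeGroup.injective_lift_of_zpow_ping_pong _ ![X₁, X₂] ?_ ?_ ?_
  · intro i
    fin_cases i <;> assumption
  · intro i j hij
    fin_cases i <;> fin_cases j <;>
      first | exact absurd rfl hij | exact hdisj | exact hdisj.symm
  · intro i j hij
    fin_cases i <;> fin_cases j <;>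
      first | exact absurd rfl hij | exact hp₁ | exact hp₂

/-- The Ping-pong Lemma: if `g₁, g₂` are permutations of `X` in a permutation group `G`, and
`X₁, X₂` are disjoint nonempty subsets with `g_i^n (X_j) ⊆ X_i` for all `n ≠ 0` and `i ≠ j`,
then `g₁, g₂` freely generate a free group of rank two. -/
theorem stmt1 {X : Type*} (G : Subgroup (Equiv.Perm X)) (g₁ g₂ : Equiv.Perm X)
    (hg₁ : g₁ ∈ G) (hg₂ : g₂ ∈ G)
    (X₁ X₂ : Set X) (h₁ : X₁.Nonempty) (h₂ : X₂.Nonempty) (hdisj : Disjoint X₁ X₂)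
    (hp₁ : ∀ n : ℤ, n ≠ 0 → ⇑(g₁ ^ n) '' X₂ ⊆ X₁)
    (hp₂ : ∀ n : ℤ, n ≠ 0 → ⇑(g₂ ^ n) '' X₁ ⊆ X₂) :
    Function.Injective
      ⇑(FreeGroup.lift (fun i : Fin 2 => if i = 0 then g₁ else g₂) :
        FreeGroup (Fin 2) →* Equiv.Perm X) :=
  stmt1_general g₁ g₂ X₁ X₂ h₁ h₂ hdisj hp₁ hp₂
end

section
/- Let f, g ∈ Homeo₊(S^1) with lifts F, G to ℝ (satisfying F(t+1)=F(t)+1, G(t+1)=G(t)+1) such that F(t) < G(t) for all t ∈ ℝ. Then there exists h ∈ Homeo₊(S^1) with rational rotation number and a lift H of h satisfying F(t) < H(t) < G(t) for all t. -/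
open Function Set

/-!
Lifts of circle homeomorphisms are continuous, so the `1`-periodic gap `G - F` is at least
some `ε > 0`, and every `c + F` with `0 < c < ε` lies strictly between `F` and `G`. One of them
has rational translation number: by Dirichlet, `k τ(m + F)` is within `δ` of an integer `p`;
at a point `x₀` with `(m + F)^k x₀ = x₀ + k τ(m + F)`, the continuous map `c ↦ (c + F)^k x₀`
moves by at least `δ` as `c` moves by `δ` around `m`, so it takes the value `x₀ + p`, and then
`τ(c + F) = p / k`.
-/

namespace CircleDeg1Lift

open Multiplicative

lemma translate_mul_apply (F : CircleDeg1Lift) (c x : ℝ) :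
    (translate (ofAdd c) * F) x = c + F x := rfl

lemma exists_pos_add_le_of_forall_lt {F G : CircleDeg1Lift} (hF : Continuous F)
    (hG : Continuous G) (hlt : ∀ t, F t < G t) : ∃ ε > 0, ∀ t, F t + ε ≤ G t := by
  have hper : Periodic (fun t => G t - F t) 1 := fun t => by
    simp only [map_add_one]
    ring
  obtain ⟨_, ⟨t₀, rfl⟩, hmin⟩ :=
    (hper.compact_of_continuous one_ne_zero (hG.sub hF)).exists_isLeast (range_nonempty _)
  refine ⟨G t₀ - F t₀, sub_pos.2 (hlt t₀), fun t => ?_⟩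
  linarith [hmin ⟨t, rfl⟩]

lemma continuous_translate_mul_pow_apply {F : CircleDeg1Lift} (hF : Continuous F) (n : ℕ)
    (x : ℝ) : Continuous fun c : ℝ => ((translate (ofAdd c) * F) ^ n) x := by
  induction n with
  | zero => exact continuous_const
  | succ n ih =>
    simp only [pow_succ', mul_apply, translate_apply]
    exact continuous_id.add (hF.comp ih)

lemma translate_mul_pow_apply_add_sub_le (F : CircleDeg1Lift) {c d : ℝ} (hcd : c ≤ d)
    {n : ℕ} (hn : 0 < n) (x : ℝ) :
    ((translate (ofAdd c) * F) ^ n) x + (d - c) ≤ ((translate (ofAdd d) * F) ^ n) x := by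
  obtain ⟨n, rfl⟩ := Nat.exists_eq_add_one_of_ne_zero hn.ne'
  have hle : translate (ofAdd c) * F ≤ translate (ofAdd d) * F := fun y => by
    simp only [translate_mul_apply]
    linarith
  simp only [pow_succ', mul_apply, translate_apply]
  linarith [F.mono (pow_mono hle n x)]

theorem exists_mem_Icc_translationNumber_translate_mul_eq_rat {F : CircleDeg1Lift}
    (hF : Continuous F) {a b : ℝ} (hab : a < b) :
    ∃ c ∈ Icc a b, ∃ q : ℚ, translationNumber (translate (ofAdd c) * F) = q := by
  set H : ℝ → CircleDeg1Lift := fun c => translate (ofAdd c) * F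
  set m := (a + b) / 2 with hm
  set α := translationNumber (H m)
  obtain ⟨N, hN⟩ := exists_nat_one_div_lt (show 0 < (b - a) / 2 by linarith)
  obtain ⟨k, hk, -, happrox⟩ := Real.exists_nat_abs_mul_sub_round_le α N.succ_pos
  have hp : |k * α - round (k * α)| ≤ (b - a) / 2 := by
    refine happrox.trans (le_trans ?_ hN.le)
    gcongr
    linarith
  obtain ⟨x₀, hx₀⟩ := exists_eq_add_translationNumber (H m ^ k)
    ((H m).continuous_pow (continuous_const.add hF) k)
  rw [translationNumber_pow] at hx₀
  have hlow : (H a ^ k) x₀ + (m - a) ≤ (H m ^ k) x₀ :=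
    translate_mul_pow_apply_add_sub_le F (by linarith) hk x₀
  have hhigh : (H m ^ k) x₀ + (b - m) ≤ (H b ^ k) x₀ :=
    translate_mul_pow_apply_add_sub_le F (by linarith) hk x₀
  obtain ⟨c, hc, hck⟩ : x₀ + round (k * α) ∈ (fun c => (H c ^ k) x₀) '' Icc a b :=
    intermediate_value_Icc hab.le (continuous_translate_mul_pow_apply hF k x₀).continuousOn
      ⟨by linarith [abs_le.1 hp], by linarith [abs_le.1 hp]⟩
  refine ⟨c, hc, round (k * α) / k, ?_⟩
  rw [translationNumber_of_map_pow_eq_add_int _ hck hk]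
  norm_cast

end CircleDeg1Lift

namespace IsLift

lemma continuous {f : S¹ ≃ₜ S¹} {F : CircleDeg1Lift} (hF : IsLift f F) : Continuous F := by
  rw [CircleDeg1Lift.continuous_iff_surjective]
  intro y
  obtain ⟨x, hx⟩ := QuotientAddGroup.mk_surjective (f.symm y)
  have hFx : ((F x - y : ℝ) : S¹) = 0 := by
    rw [AddCircle.coe_sub, ← hF x, show (x : S¹) = f.symm y from hx, f.apply_symm_apply,
      sub_self]
  obtain ⟨k, hk⟩ := (AddCircle.coe_eq_zero_iff 1).1 hFx
  refine ⟨x - k, ?_⟩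
  rw [F.map_sub_int]
  simp only [zsmul_eq_mul, mul_one] at hk
  linarith

lemma translate_mul {f : S¹ ≃ₜ S¹} {F : CircleDeg1Lift} (hF : IsLift f F) (c : ℝ) :
    IsLift (f.trans (Homeomorph.addLeft (c : S¹)))
      (CircleDeg1Lift.translate (Multiplicative.ofAdd c) * F) := fun x => by
  simp [hF x]

end IsLift

/-- Between any two circle homeomorphisms whose lifts satisfy `F < G` pointwise, one can insert
a circle homeomorphism with rational rotation number. -/
theorem stmt6 (f g : S¹ ≃ₜ S¹) (F G : CircleDeg1Lift) (hF : IsLift f F) (hG : IsLift g G)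
    (hlt : ∀ t : ℝ, F t < G t) :
    ∃ (h : S¹ ≃ₜ S¹) (H : CircleDeg1Lift), IsLift h H ∧
      (∀ t : ℝ, F t < H t ∧ H t < G t) ∧
      ∃ q : ℚ, H.translationNumber = (q : ℝ) := by
  obtain ⟨ε, hε, hgap⟩ :=
    CircleDeg1Lift.exists_pos_add_le_of_forall_lt hF.continuous hG.continuous hlt
  obtain ⟨c, ⟨hc₀, hc₁⟩, hrat⟩ :=
    CircleDeg1Lift.exists_mem_Icc_translationNumber_translate_mul_eq_rat hF.continuous
      (show ε / 3 < 2 * ε / 3 by linarith)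
  refine ⟨_, _, hF.translate_mul c, fun t => ?_, hrat⟩
  rw [CircleDeg1Lift.translate_mul_apply]
  constructor <;> linarith [hgap t]
end

section
/- Let H₀ ≤ Homeo₊([0,1]) and let (a₁,b₁), …, (a_r,b_r) be finitely many connected components of the support of the action of H₀ on [0,1]. Then for every ε > 0 there exists w ∈ H₀ such that w([a_i+ε, b_i−ε]) ∩ [a_i+ε, b_i−ε] = ∅ for every i with a_i+ε < b_i−ε. -/
open Function Set

/- ------------------------------------------------------------------------- -/
/- Auxiliary lemmas for the throw-off lemma.                                  -/

section ThrowAux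

private lemma homeo_mul_apply (f g : ℝ ≃ₜ ℝ) (x : ℝ) : (f * g) x = f (g x) := rfl

private lemma homeo_inv_apply (g : ℝ ≃ₜ ℝ) (x : ℝ) : (g⁻¹) x = g.symm x := rfl

private lemma mem_strictMono (H₀ : Subgroup (ℝ ≃ₜ ℝ))
    (hmono : ∀ g ∈ H₀, Monotone ⇑g) {g : ℝ ≃ₜ ℝ} (hg : g ∈ H₀) :
    StrictMono ⇑g :=
  (hmono g hg).strictMono_of_injective (EquivLike.injective g)

private lemma maps_Ioo (H₀ : Subgroup (ℝ ≃ₜ ℝ)) (hmono : ∀ g ∈ H₀, Monotone ⇑g) {A B : ℝ}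
    (hfix : ∀ g ∈ H₀, g A = A ∧ g B = B) {g : ℝ ≃ₜ ℝ} (hg : g ∈ H₀) {z : ℝ}
    (hz : z ∈ Ioo A B) : g z ∈ Ioo A B := by
  have sm := mem_strictMono H₀ hmono hg
  constructor
  · have h1 : g A < g z := sm hz.1
    rwa [(hfix g hg).1] at h1
  · have h1 : g z < g B := sm hz.2
    rwa [(hfix g hg).2] at h1

/-- Orbit supremum lemma: on a component with no global interior fixed point,
some element of `H₀` moves `x` above `y`. -/
private lemma moveup (H₀ : Subgroup (ℝ ≃ₜ ℝ)) (hmono : ∀ g ∈ H₀, Monotone ⇑g) {A B : ℝ}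
    (hfix : ∀ g ∈ H₀, g A = A ∧ g B = B)
    (hmove : ∀ z ∈ Ioo A B, ∃ g ∈ H₀, g z ≠ z)
    {x y : ℝ} (hx : x ∈ Ioo A B) (hy : y ∈ Ioo A B) :
    ∃ g ∈ H₀, y < g x := by
  by_contra hcon
  push_neg at hcon
  set O : Set ℝ := {z | ∃ g ∈ H₀, g x = z} with hO
  have hmemO : x ∈ O := ⟨1, H₀.one_mem, rfl⟩
  have hub : ∀ z ∈ O, z ≤ y := by
    rintro z ⟨g, hg, rfl⟩
    exact hcon g hg
  have hbdd : BddAbove O := ⟨y, hub⟩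
  have hxc : x ≤ sSup O := le_csSup hbdd hmemO
  have hcy : sSup O ≤ y := csSup_le ⟨x, hmemO⟩ hub
  have hcI : sSup O ∈ Ioo A B := ⟨lt_of_lt_of_le hx.1 hxc, lt_of_le_of_lt hcy hy.2⟩
  obtain ⟨g₀, hg₀, hne₀⟩ := hmove (sSup O) hcI
  obtain ⟨g₁, hg₁, hlt⟩ : ∃ g ∈ H₀, sSup O < g (sSup O) := by
    rcases lt_or_gt_of_ne hne₀ with h | h
    · refine ⟨g₀⁻¹, H₀.inv_mem hg₀, ?_⟩
      have sm := mem_strictMono H₀ hmono hg₀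
      have h2 : g₀ (sSup O) < g₀ (g₀.symm (sSup O)) := by
        rwa [g₀.apply_symm_apply]
      exact sm.lt_iff_lt.mp h2
    · exact ⟨g₀, hg₀, h⟩
  have sm₁ := mem_strictMono H₀ hmono hg₁
  have h3 : g₁.symm (sSup O) < sSup O := by
    have h4 : g₁ (g₁.symm (sSup O)) < g₁ (sSup O) := by
      rwa [g₁.apply_symm_apply]
    exact sm₁.lt_iff_lt.mp h4
  obtain ⟨z, hz, hltz⟩ := exists_lt_of_lt_csSup ⟨x, hmemO⟩ h3
  obtain ⟨g, hg, rfl⟩ := hz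
  have h5 : sSup O < g₁ (g x) := by
    have h6 := sm₁ hltz
    rwa [g₁.apply_symm_apply] at h6
  have h7 : (g₁ * g) x ∈ O := ⟨g₁ * g, H₀.mul_mem hg₁ hg, rfl⟩
  have h8 : (g₁ * g) x ≤ sSup O := le_csSup hbdd h7
  exact absurd h8 (not_le.mpr h5)

/-- The main induction: a single element of `H₀` throwing each of finitely many
compacts (given by interior points) off itself, with a uniform direction vector. -/
private lemma throw (H₀ : Subgroup (ℝ ≃ₜ ℝ)) (hmono : ∀ g ∈ H₀, Monotone ⇑g)
    {r : ℕ} {a b : Fin r → ℝ}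
    (hfix : ∀ i, ∀ g ∈ H₀, g (a i) = a i ∧ g (b i) = b i)
    (hmove : ∀ i, ∀ z ∈ Ioo (a i) (b i), ∃ g ∈ H₀, g z ≠ z)
    (T : Finset (Fin r)) :
    ∃ d : Fin r → Bool, ∀ x y : Fin r → ℝ,
      (∀ i ∈ T, x i ∈ Ioo (a i) (b i)) → (∀ i ∈ T, y i ∈ Ioo (a i) (b i)) →
      ∃ g ∈ H₀, ∀ i ∈ T,
        (d i = true → y i < g (x i)) ∧ (d i = false → g (y i) < x i) := by
  classical
  induction T using Finset.induction_on with
  | empty =>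
      exact ⟨fun _ => true, fun x y _ _ =>
        ⟨1, H₀.one_mem, fun i hi => absurd hi (Finset.notMem_empty i)⟩⟩
  | @insert j T hj IH =>
      obtain ⟨d, hd⟩ := IH
      by_cases hEU : ∀ x y : Fin r → ℝ,
          (∀ i ∈ insert j T, x i ∈ Ioo (a i) (b i)) →
          (∀ i ∈ insert j T, y i ∈ Ioo (a i) (b i)) →
          ∃ g ∈ H₀, (∀ i ∈ T,
            (d i = true → y i < g (x i)) ∧ (d i = false → g (y i) < x i)) ∧
            y j < g (x j)
      · refine ⟨Function.update d j true, fun x y hx hy => ?_⟩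
        obtain ⟨g, hg, hT, hjc⟩ := hEU x y hx hy
        refine ⟨g, hg, fun i hi => ?_⟩
        rcases Finset.mem_insert.1 hi with rfl | hiT
        · refine ⟨fun _ => hjc, fun hfalse => ?_⟩
          rw [Function.update_self] at hfalse
          cases hfalse
        · have hne : i ≠ j := fun h => hj (h ▸ hiT)
          rw [Function.update_of_ne hne]
          exact hT i hiT
      · by_cases hED : ∀ x y : Fin r → ℝ,
            (∀ i ∈ insert j T, x i ∈ Ioo (a i) (b i)) →
            (∀ i ∈ insert j T, y i ∈ Ioo (a i) (b i)) →
            ∃ g ∈ H₀, (∀ i ∈ T,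
              (d i = true → y i < g (x i)) ∧ (d i = false → g (y i) < x i)) ∧
              g (y j) < x j
        · refine ⟨Function.update d j false, fun x y hx hy => ?_⟩
          obtain ⟨g, hg, hT, hjc⟩ := hED x y hx hy
          refine ⟨g, hg, fun i hi => ?_⟩
          rcases Finset.mem_insert.1 hi with rfl | hiT
          · refine ⟨fun htrue => ?_, fun _ => hjc⟩
            rw [Function.update_self] at htrue
            cases htrue
          · have hne : i ≠ j := fun h => hj (h ▸ hiT)
            rw [Function.update_of_ne hne]
            exact hT i hiT
        · exfalso
          push_neg at hEU hED
          obtain ⟨x₁, y₁, hx₁, hy₁, hbad₁⟩ := hEU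
          obtain ⟨x₂, y₂, hx₂, hy₂, hbad₂⟩ := hED
          -- interior facts
          have hminI : ∀ {A B u v : ℝ}, u ∈ Ioo A B → v ∈ Ioo A B → min u v ∈ Ioo A B :=
            fun h1 h2 => ⟨lt_min h1.1 h2.1, lt_of_le_of_lt (min_le_left _ _) h1.2⟩
          have hmaxI : ∀ {A B u v : ℝ}, u ∈ Ioo A B → v ∈ Ioo A B → max u v ∈ Ioo A B :=
            fun h1 h2 => ⟨lt_of_lt_of_le h1.1 (le_max_left _ _), max_lt h1.2 h2.2⟩
          have hpI : x₁ j ∈ Ioo (a j) (b j) := hx₁ j (Finset.mem_insert_self _ _)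
          have hqI : y₁ j ∈ Ioo (a j) (b j) := hy₁ j (Finset.mem_insert_self _ _)
          have hp'I : x₂ j ∈ Ioo (a j) (b j) := hx₂ j (Finset.mem_insert_self _ _)
          have hq'I : y₂ j ∈ Ioo (a j) (b j) := hy₂ j (Finset.mem_insert_self _ _)
          -- h₂ throws x₁ j above y₂ j on interval j
          obtain ⟨h₂, hh₂, hth₂⟩ :=
            moveup H₀ hmono (hfix j) (hmove j) hpI hq'I
          -- u throws x₂ j above y₁ j on interval j
          obtain ⟨u, hu, hu1⟩ :=
            moveup H₀ hmono (hfix j) (hmove j) hp'I hqI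
          have smu := mem_strictMono H₀ hmono hu
          -- hardened points
          set X : Fin r → ℝ := fun i => min (x₁ i) (x₂ i) with hXdef
          set Y : Fin r → ℝ := fun i => max (y₁ i) (y₂ i) with hYdef
          have hXI : ∀ i ∈ T, X i ∈ Ioo (a i) (b i) := fun i hi =>
            hminI (hx₁ i (Finset.mem_insert_of_mem hi)) (hx₂ i (Finset.mem_insert_of_mem hi))
          have hYI : ∀ i ∈ T, Y i ∈ Ioo (a i) (b i) := fun i hi =>
            hmaxI (hy₁ i (Finset.mem_insert_of_mem hi)) (hy₂ i (Finset.mem_insert_of_mem hi))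
          set x' : Fin r → ℝ := fun i =>
            if d i = true then min (X i) (h₂ (X i)) else min (X i) (u (X i)) with hx'def
          set y' : Fin r → ℝ := fun i =>
            if d i = true then max (Y i) (u (Y i)) else max (Y i) (h₂ (Y i)) with hy'def
          have hx'I : ∀ i ∈ T, x' i ∈ Ioo (a i) (b i) := by
            intro i hi
            by_cases hdi : d i = true
            · simp only [hx'def, hdi, if_true]
              exact hminI (hXI i hi) (maps_Ioo H₀ hmono (hfix i) hh₂ (hXI i hi))
            · simp only [hx'def, hdi, if_false]
              exact hminI (hXI i hi) (maps_Ioo H₀ hmono (hfix i) hu (hXI i hi))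
          have hy'I : ∀ i ∈ T, y' i ∈ Ioo (a i) (b i) := by
            intro i hi
            by_cases hdi : d i = true
            · simp only [hy'def, hdi, if_true]
              exact hmaxI (hYI i hi) (maps_Ioo H₀ hmono (hfix i) hu (hYI i hi))
            · simp only [hy'def, hdi, if_false]
              exact hmaxI (hYI i hi) (maps_Ioo H₀ hmono (hfix i) hh₂ (hYI i hi))
          obtain ⟨g, hg, hgT⟩ := hd x' y' hx'I hy'I
          have smg := mem_strictMono H₀ hmono hg
          have hmg := hmono g hg
          have hmh₂ := hmono h₂ hh₂
          have hmu := hmono u hu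
          -- conditions for g * h₂ with points (x₁, y₁)
          have hc₂ : ∀ i ∈ T,
              (d i = true → y₁ i < (g * h₂) (x₁ i)) ∧
              (d i = false → (g * h₂) (y₁ i) < x₁ i) := by
            intro i hi
            obtain ⟨hU, hD⟩ := hgT i hi
            constructor
            · intro hdi
              have h1 : y' i < g (x' i) := hU hdi
              have h2 : y₁ i ≤ y' i := by
                simp only [hy'def, hdi, if_true, hYdef]
                exact le_trans (le_max_left _ _) (le_max_left _ _)
              have h3 : x' i ≤ h₂ (x₁ i) := by
                simp only [hx'def, hdi, if_true]
                exact le_trans (min_le_right _ _) (hmh₂ (by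
                  simp only [hXdef]; exact min_le_left _ _))
              calc y₁ i ≤ y' i := h2
                _ < g (x' i) := h1
                _ ≤ g (h₂ (x₁ i)) := hmg h3
            · intro hdi
              have h1 : g (y' i) < x' i := hD hdi
              have hdi' : ¬ (d i = true) := by simp [hdi]
              have h2 : h₂ (y₁ i) ≤ y' i := by
                simp only [hy'def, if_neg hdi']
                exact le_trans (hmh₂ (by simp only [hYdef]; exact le_max_left _ _))
                  (le_max_right _ _)
              have h3 : x' i ≤ x₁ i := by
                simp only [hx'def, if_neg hdi', hXdef]
                exact le_trans (min_le_left _ _) (min_le_left _ _)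
              calc (g * h₂) (y₁ i) = g (h₂ (y₁ i)) := rfl
                _ ≤ g (y' i) := hmg h2
                _ < x' i := h1
                _ ≤ x₁ i := h3
          -- conditions for u⁻¹ * g with points (x₂, y₂)
          have hc₁ : ∀ i ∈ T,
              (d i = true → y₂ i < (u⁻¹ * g) (x₂ i)) ∧
              (d i = false → (u⁻¹ * g) (y₂ i) < x₂ i) := by
            intro i hi
            obtain ⟨hU, hD⟩ := hgT i hi
            constructor
            · intro hdi
              have h1 : y' i < g (x' i) := hU hdi
              have h2 : u (y₂ i) ≤ y' i := by
                simp only [hy'def, hdi, if_true]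
                exact le_trans (hmu (by simp only [hYdef]; exact le_max_right _ _))
                  (le_max_right _ _)
              have h3 : x' i ≤ x₂ i := by
                simp only [hx'def, hdi, if_true, hXdef]
                exact le_trans (min_le_left _ _) (min_le_right _ _)
              have h4 : u (y₂ i) < g (x₂ i) :=
                lt_of_le_of_lt h2 (lt_of_lt_of_le h1 (hmg h3))
              show y₂ i < u.symm (g (x₂ i))
              have h5 : u (y₂ i) < u (u.symm (g (x₂ i))) := by
                rwa [u.apply_symm_apply]
              exact smu.lt_iff_lt.mp h5
            · intro hdi
              have hdi' : ¬ (d i = true) := by simp [hdi]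
              have h1 : g (y' i) < x' i := hD hdi
              have h2 : y₂ i ≤ y' i := by
                simp only [hy'def, if_neg hdi', hYdef]
                exact le_trans (le_max_right _ _) (le_max_left _ _)
              have h3 : x' i ≤ u (x₂ i) := by
                simp only [hx'def, if_neg hdi']
                exact le_trans (min_le_right _ _) (hmu (by
                  simp only [hXdef]; exact min_le_right _ _))
              have h4 : g (y₂ i) < u (x₂ i) :=
                lt_of_le_of_lt (hmg h2) (lt_of_lt_of_le h1 h3)
              show u.symm (g (y₂ i)) < x₂ i
              have h5 : u (u.symm (g (y₂ i))) < u (x₂ i) := by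
                rwa [u.apply_symm_apply]
              exact smu.lt_iff_lt.mp h5
          -- contradiction
          have hbj₁ : (g * h₂) (x₁ j) ≤ y₁ j :=
            hbad₁ (g * h₂) (H₀.mul_mem hg hh₂) hc₂
          have hbj₂ : x₂ j ≤ (u⁻¹ * g) (y₂ j) :=
            hbad₂ (u⁻¹ * g) (H₀.mul_mem (H₀.inv_mem hu) hg) hc₁
          have h5 : u (x₂ j) ≤ g (y₂ j) := by
            have h6 := hmu hbj₂
            have h7 : (u⁻¹ * g) (y₂ j) = u.symm (g (y₂ j)) := rfl
            rw [h7] at h6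
            rwa [u.apply_symm_apply] at h6
          have h6 : y₁ j < g (y₂ j) := lt_of_lt_of_le hu1 h5
          have h7 : g (y₂ j) ≤ g (h₂ (x₁ j)) := hmg (le_of_lt hth₂)
          have h8 : y₁ j < (g * h₂) (x₁ j) := lt_of_lt_of_le h6 h7
          exact absurd hbj₁ (not_le.mpr h8)

end ThrowAux

/-- Lemma 3.6 ("throw-off"): given a group `H₀` of orientation-preserving homeomorphisms of
the unit interval (modelled as monotone homeomorphisms of `ℝ` supported in `(0,1)`) and
finitely many connected components `(aᵢ, bᵢ)` of the support of its action, for every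
`ε > 0` there is `w ∈ H₀` moving each `[aᵢ+ε, bᵢ−ε]` entirely off itself. -/
theorem stmt19 (H₀ : Subgroup (ℝ ≃ₜ ℝ))
    (hH₀ : ∀ g ∈ H₀, Monotone ⇑g ∧ ∀ x : ℝ, x ∉ Set.Ioo (0:ℝ) 1 → g x = x)
    (r : ℕ) (a b : Fin r → ℝ)
    (hcomp : ∀ i, a i < b i ∧ ∃ x ∈ Set.Ioo (a i) (b i),
        connectedComponentIn {y : ℝ | ∃ g ∈ H₀, g y ≠ y} x = Set.Ioo (a i) (b i)) :
    ∀ ε : ℝ, 0 < ε → ∃ w ∈ H₀, ∀ i, a i + ε < b i - ε →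
      ⇑w '' Set.Icc (a i + ε) (b i - ε) ∩ Set.Icc (a i + ε) (b i - ε) = ∅ := by
  classical
  intro ε hε
  have hmono : ∀ g ∈ H₀, Monotone ⇑g := fun g hg => (hH₀ g hg).1
  set S : Set ℝ := {y : ℝ | ∃ g ∈ H₀, g y ≠ y} with hSdef
  have hS : ∀ i, Ioo (a i) (b i) ⊆ S := by
    intro i
    obtain ⟨hab, x₀, hx₀, hcc⟩ := hcomp i
    rw [← hcc]
    exact connectedComponentIn_subset _ _
  have hnotS : ∀ i, a i ∉ S ∧ b i ∉ S := by
    intro i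
    obtain ⟨hab, x₀, hx₀, hcc⟩ := hcomp i
    constructor
    · intro ha
      have hsub : insert (a i) (Ioo (a i) (b i)) ⊆ S :=
        Set.insert_subset_iff.mpr ⟨ha, hS i⟩
      have hpre : IsPreconnected (insert (a i) (Ioo (a i) (b i))) := by
        rw [Set.Ioo_insert_left hab]
        exact isPreconnected_Ico
      have h1 := hpre.subset_connectedComponentIn (Set.mem_insert_of_mem _ hx₀) hsub
      rw [hcc] at h1
      exact lt_irrefl (a i) (h1 (Set.mem_insert _ _)).1
    · intro hb
      have hsub : insert (b i) (Ioo (a i) (b i)) ⊆ S :=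
        Set.insert_subset_iff.mpr ⟨hb, hS i⟩
      have hpre : IsPreconnected (insert (b i) (Ioo (a i) (b i))) := by
        rw [Set.Ioo_insert_right hab]
        exact isPreconnected_Ioc
      have h1 := hpre.subset_connectedComponentIn (Set.mem_insert_of_mem _ hx₀) hsub
      rw [hcc] at h1
      exact lt_irrefl (b i) (h1 (Set.mem_insert _ _)).2
  have hfix : ∀ i, ∀ g ∈ H₀, g (a i) = a i ∧ g (b i) = b i := by
    intro i g hg
    constructor
    · by_contra hne
      exact (hnotS i).1 ⟨g, hg, hne⟩
    · by_contra hne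
      exact (hnotS i).2 ⟨g, hg, hne⟩
  have hmove : ∀ i, ∀ z ∈ Ioo (a i) (b i), ∃ g ∈ H₀, g z ≠ z := by
    intro i z hz
    exact hS i hz
  obtain ⟨d, hd⟩ := throw H₀ hmono hfix hmove Finset.univ
  set xx : Fin r → ℝ := fun i =>
    if a i + ε < b i - ε then a i + ε else (a i + b i) / 2 with hxxdef
  set yy : Fin r → ℝ := fun i =>
    if a i + ε < b i - ε then b i - ε else (a i + b i) / 2 with hyydef
  have hmid : ∀ i, (a i + b i) / 2 ∈ Ioo (a i) (b i) := by
    intro i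
    have hab := (hcomp i).1
    constructor <;> [linarith; linarith]
  have hxxI : ∀ i ∈ Finset.univ, xx i ∈ Ioo (a i) (b i) := by
    intro i _
    by_cases hi : a i + ε < b i - ε
    · simp only [hxxdef, if_pos hi]
      have hab := (hcomp i).1
      constructor <;> [linarith; linarith]
    · simp only [hxxdef, if_neg hi]
      exact hmid i
  have hyyI : ∀ i ∈ Finset.univ, yy i ∈ Ioo (a i) (b i) := by
    intro i _
    by_cases hi : a i + ε < b i - ε
    · simp only [hyydef, if_pos hi]
      have hab := (hcomp i).1
      constructor <;> [linarith; linarith]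
    · simp only [hyydef, if_neg hi]
      exact hmid i
  obtain ⟨w, hw, hwP⟩ := hd xx yy hxxI hyyI
  refine ⟨w, hw, fun i hi => ?_⟩
  have hcond := hwP i (Finset.mem_univ i)
  have hxxi : xx i = a i + ε := by simp only [hxxdef, if_pos hi]
  have hyyi : yy i = b i - ε := by simp only [hyydef, if_pos hi]
  rw [hxxi, hyyi] at hcond
  have hmw := hmono w hw
  apply Set.eq_empty_iff_forall_notMem.2
  rintro z ⟨⟨t, ht, rfl⟩, hz⟩
  cases hdi : d i with
  | true =>
      have h1 : b i - ε < w (a i + ε) := hcond.1 hdi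
      have h2 : w (a i + ε) ≤ w t := hmw ht.1
      have h3 : w t ≤ b i - ε := hz.2
      linarith
  | false =>
      have h1 : w (b i - ε) < a i + ε := hcond.2 hdi
      have h2 : w t ≤ w (b i - ε) := hmw ht.2
      have h3 : a i + ε ≤ w t := hz.1
      linarith
end
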